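/- Let a < b be reals, ρ : ℝ → ℝ integrable with support contained in [a,b], n ≥ 1, and z ∈ ℝ with z ∉ [a,b]. Define, with the convention that a 0×0 determinant equals 1, the Hankel determinants D_k = det(∫_ℝ u^{i+j} ρ(u) du)_{0≤i,j≤k−1}, A_k = det(∫_ℝ u^{i+j} (z − u) ρ(u) du)_{0≤i,j≤k−1}, and B_k = det(∫_ℝ u^{i+j} ρ(u)/(z − u) du)_{0≤i,j≤k−1}. Then A_n · B_n − A_{n−1} · B_{n+1} = D_n². (This is the Fay-type identity τ_n(t−[z^{-1}])τ_n(t+[z^{-1}]) − z^{-2}τ_{n−1}(t−[z^{-1}])τ_{n+1}(t+[z^{-1}]) = τ_n(t)² written in terms of Hankel determinants.) -/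

import Mathlib

/-!
Put `β k = ∫ u^k ρ(u)/(z - u) du`. Since `ρ = (z - u) · ρ/(z - u)`, the moments of `ρ` and
of `(z - u) ρ` arise from `β` by applying `β ↦ (k ↦ z β k - β (k + 1))` once and twice, so the
claim is a polynomial identity in `z, β 0, …, β (2n)`. It suffices to prove it for
indeterminates, in the fraction field of `ℤ[z, β 0, β 1, …]`, where `z` and `G = H_{n+1}(β)`
are invertible (`G` specializes to an anti-diagonal permutation matrix).

There, let `C` be the matrix whose columns are the coefficients of `(z - u) u^j` for `j < n` and
of `u^n`. The leading blocks of `G`, `G C` and `Cᵀ G C` are the Hankel matrices of `ρ/(z - u)`,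
`ρ` and `(z - u) ρ`, and Jacobi's complementary-minor identity
`det M · det (M⁻¹)_{JJ} = det M_{J'J'}`, for `J = {n}` and `J = {n-1, n}`, expresses all five
determinants through `det G`, `z` and the entries `a, b, c` of the symmetric matrix
`(Cᵀ G C)⁻¹` at `(n, n)`, `(n, n-1)`, `(n-1, n-1)`. The identity becomes
`a (a - 2b + c) - (a c - b²) = (a - b)²`.
-/

open MeasureTheory

namespace Matrix

section Jacobi

variable {R : Type*} [CommRing R]

theorem det_mul_det_inv_submatrix_natAdd {k l : ℕ} (M : Matrix (Fin (k + l)) (Fin (k + l)) R)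
    (hM : IsUnit M.det) :
    M.det * (M⁻¹.submatrix (Fin.natAdd k) (Fin.natAdd k)).det
      = (M.submatrix (Fin.castAdd l) (Fin.castAdd l)).det := by
  set N := M.submatrix finSumFinEquiv finSumFinEquiv
  set P := N⁻¹ with hP
  have hN : N * P = 1 := N.mul_nonsing_inv (by rwa [det_submatrix_equiv_self])
  rw [← fromBlocks_toBlocks N, ← fromBlocks_toBlocks P, fromBlocks_multiply,
    ← fromBlocks_one, fromBlocks_inj] at hN
  obtain ⟨-, h₁₂, -, h₂₂⟩ := hN
  have key : N * fromBlocks 1 P.toBlocks₁₂ 0 P.toBlocks₂₂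
      = fromBlocks N.toBlocks₁₁ 0 N.toBlocks₂₁ 1 := by
    conv_lhs => rw [← fromBlocks_toBlocks N]
    rw [fromBlocks_multiply, h₁₂, h₂₂]
    simp
  have := congrArg det key
  rw [det_mul, det_fromBlocks_zero₂₁, det_fromBlocks_zero₁₂, det_one, det_one, one_mul,
    mul_one, det_submatrix_equiv_self, hP, inv_submatrix_equiv] at this
  exact this

theorem det_mul_inv_apply_last {k : ℕ} (M : Matrix (Fin (k + 1)) (Fin (k + 1)) R)
    (hM : IsUnit M.det) :
    M.det * M⁻¹ (Fin.last k) (Fin.last k) = (M.submatrix Fin.castSucc Fin.castSucc).det := by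
  have h := det_mul_det_inv_submatrix_natAdd (l := 1) M hM
  rwa [det_unique (M⁻¹.submatrix (Fin.natAdd k) (Fin.natAdd k) : Matrix (Fin 1) (Fin 1) R)] at h

theorem det_mul_inv_two_minor_last {k : ℕ} (M : Matrix (Fin (k + 2)) (Fin (k + 2)) R)
    (hM : IsUnit M.det) :
    M.det * (M⁻¹ (Fin.last k).castSucc (Fin.last k).castSucc
          * M⁻¹ (Fin.last (k + 1)) (Fin.last (k + 1))
        - M⁻¹ (Fin.last k).castSucc (Fin.last (k + 1))
          * M⁻¹ (Fin.last (k + 1)) (Fin.last k).castSucc)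
      = (M.submatrix (Fin.castAdd 2) (Fin.castAdd 2)).det := by
  have h := det_mul_det_inv_submatrix_natAdd (l := 2) M hM
  rwa [det_fin_two] at h

end Jacobi

section Hankel

variable {α : Type*}

def hankel (k : ℕ) (f : ℕ → α) : Matrix (Fin k) (Fin k) α :=
  of fun i j => f (i + j)

theorem isSymm_hankel (k : ℕ) (f : ℕ → α) : (hankel k f).IsSymm :=
  IsSymm.ext fun i j => by simp only [hankel, of_apply, add_comm]

theorem hankel_submatrix_castSucc {k : ℕ} (f : ℕ → α) :
    (hankel (k + 1) f).submatrix Fin.castSucc Fin.castSucc = hankel k f :=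
  rfl

theorem hankel_single_pred_eq_permMatrix {R : Type*} [CommRing R] (k : ℕ) :
    hankel k (Pi.single (k - 1) 1 : ℕ → R)
      = (Fin.revPerm : Equiv.Perm (Fin k)).permMatrix R := by
  ext i j
  simp only [hankel, of_apply, Equiv.Perm.permMatrix, PEquiv.toMatrix_apply,
    Equiv.toPEquiv_apply, Option.mem_def, Option.some.injEq, Fin.revPerm_apply, Fin.ext_iff,
    Fin.val_rev, Pi.single_apply]
  have := i.isLt
  have := j.isLt
  split_ifs <;> first | rfl | omega

end Hankel

end Matrix

open Matrix

variable {R S : Type*} [CommRing R] [CommRing S]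

def momentsMulSub (z : R) (β : ℕ → R) : ℕ → R :=
  fun k => z * β k - β (k + 1)

namespace Matrix

/-- Column `j ≤ m` holds the coefficients of `(z - u) u^j` in the basis `1, u, …, u^(m+1)`;
the last column is that of `u^(m+1)`. -/
def mulSubMatrix (m : ℕ) (z : R) : Matrix (Fin (m + 2)) (Fin (m + 2)) R :=
  of fun i j => if i = j then (if j = Fin.last (m + 1) then 1 else z)
    else if (i : ℕ) = j + 1 then -1 else 0

section MulSubMatrix

variable (m : ℕ) (z : R)

theorem mulSubMatrix_col_castSucc (j : Fin (m + 1)) :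
    (fun i => mulSubMatrix m z i j.castSucc) = Pi.single j.castSucc z - Pi.single j.succ 1 := by
  ext i
  simp only [mulSubMatrix, of_apply, Pi.sub_apply, Pi.single_apply, Fin.ext_iff, Fin.val_last,
    Fin.val_castSucc, Fin.val_succ]
  split_ifs <;> first | omega | simp

theorem mulSubMatrix_last :
    mulSubMatrix m z (Fin.last (m + 1))
      = Pi.single (Fin.last (m + 1)) 1 - Pi.single (Fin.last m).castSucc 1 := by
  ext j
  simp only [mulSubMatrix, of_apply, Pi.sub_apply, Pi.single_apply, Fin.ext_iff, Fin.val_last,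
    Fin.val_castSucc]
  split_ifs <;> first | omega | simp

theorem det_mulSubMatrix : (mulSubMatrix m z).det = z ^ (m + 1) := by
  rw [det_of_isLowerTriangular _ fun i j (hij : i < j) => ?_, Fin.prod_univ_castSucc]
  · simp [mulSubMatrix, Fin.castSucc_ne_last]
  · simp only [mulSubMatrix, of_apply, Fin.lt_def] at hij ⊢
    rw [if_neg (by omega), if_neg (by omega)]

theorem mul_mulSubMatrix_apply_castSucc (M : Matrix (Fin (m + 2)) (Fin (m + 2)) R)
    (i : Fin (m + 2)) (j : Fin (m + 1)) :
    (M * mulSubMatrix m z) i j.castSucc = M i j.castSucc * z - M i j.succ := by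
  rw [mul_apply', mulSubMatrix_col_castSucc, dotProduct_sub, dotProduct_single, dotProduct_single,
    mul_one]

theorem mulSubMatrix_transpose_mul_apply_castSucc (M : Matrix (Fin (m + 2)) (Fin (m + 2)) R)
    (i : Fin (m + 1)) (j : Fin (m + 2)) :
    ((mulSubMatrix m z)ᵀ * M) i.castSucc j = z * M i.castSucc j - M i.succ j := by
  rw [← transpose_apply (_ * M), transpose_mul, transpose_transpose,
    mul_mulSubMatrix_apply_castSucc, transpose_apply, transpose_apply, mul_comm]

theorem mul_mulSubMatrix_transpose_apply_last (M : Matrix (Fin (m + 2)) (Fin (m + 2)) R)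
    (i : Fin (m + 2)) :
    (M * (mulSubMatrix m z)ᵀ) i (Fin.last (m + 1))
      = M i (Fin.last (m + 1)) - M i (Fin.last m).castSucc := by
  rw [mul_apply']
  simp only [transpose_apply]
  rw [mulSubMatrix_last, dotProduct_sub, dotProduct_single, dotProduct_single, mul_one, mul_one]

theorem mulSubMatrix_mul_apply_last (M : Matrix (Fin (m + 2)) (Fin (m + 2)) R)
    (j : Fin (m + 2)) :
    (mulSubMatrix m z * M) (Fin.last (m + 1)) j
      = M (Fin.last (m + 1)) j - M (Fin.last m).castSucc j := by
  rw [mul_apply', mulSubMatrix_last, sub_dotProduct, single_dotProduct, single_dotProduct,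
    one_mul, one_mul]

theorem hankel_mul_mulSubMatrix_apply_castSucc (β : ℕ → R) (i : Fin (m + 2))
    (j : Fin (m + 1)) :
    (hankel (m + 2) β * mulSubMatrix m z) i j.castSucc = momentsMulSub z β (i + j) := by
  rw [mul_mulSubMatrix_apply_castSucc]
  simp only [hankel, of_apply, momentsMulSub, Fin.val_castSucc, Fin.val_succ, add_assoc]
  ring

theorem transpose_mul_hankel_mul_mulSubMatrix_apply_castSucc (β : ℕ → R) (i j : Fin (m + 1)) :
    ((mulSubMatrix m z)ᵀ * hankel (m + 2) β * mulSubMatrix m z) i.castSucc j.castSucc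
      = momentsMulSub z (momentsMulSub z β) (i + j) := by
  rw [Matrix.mul_assoc, mulSubMatrix_transpose_mul_apply_castSucc,
    hankel_mul_mulSubMatrix_apply_castSucc, hankel_mul_mulSubMatrix_apply_castSucc]
  simp only [momentsMulSub, Fin.val_castSucc, Fin.val_succ, add_right_comm]

theorem hankel_mul_mulSubMatrix_submatrix_castSucc (β : ℕ → R) :
    (hankel (m + 2) β * mulSubMatrix m z).submatrix Fin.castSucc Fin.castSucc
      = hankel (m + 1) (momentsMulSub z β) := by
  ext i j
  exact hankel_mul_mulSubMatrix_apply_castSucc m z β i.castSucc j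

theorem transpose_mul_hankel_mul_mulSubMatrix_submatrix_castSucc (β : ℕ → R) :
    ((mulSubMatrix m z)ᵀ * hankel (m + 2) β * mulSubMatrix m z).submatrix
        Fin.castSucc Fin.castSucc
      = hankel (m + 1) (momentsMulSub z (momentsMulSub z β)) := by
  ext i j
  exact transpose_mul_hankel_mul_mulSubMatrix_apply_castSucc m z β i j

end MulSubMatrix

end Matrix

theorem hankel_fay_identity_of_field {K : Type*} [Field K] (m : ℕ) {z : K} (hz : z ≠ 0)
    {β : ℕ → K} (hβ : (hankel (m + 2) β).det ≠ 0) :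
    (hankel (m + 1) (momentsMulSub z (momentsMulSub z β))).det * (hankel (m + 1) β).det
      - (hankel m (momentsMulSub z (momentsMulSub z β))).det * (hankel (m + 2) β).det
      = (hankel (m + 1) (momentsMulSub z β)).det ^ 2 := by
  set G := hankel (m + 2) β
  set C := mulSubMatrix m z
  set S := Cᵀ * G * C with hSdef
  have hC : C.det = z ^ (m + 1) := det_mulSubMatrix m z
  have hCu : IsUnit C.det := by rw [hC]; exact (pow_ne_zero _ hz).isUnit
  have hCTu : IsUnit Cᵀ.det := by rwa [det_transpose]
  have hGC : (G * C).det = G.det * z ^ (m + 1) := by rw [det_mul, hC]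
  have hS : S.det = z ^ (m + 1) * G.det * z ^ (m + 1) := by
    rw [det_mul, det_mul, det_transpose, hC]
  have hSu : IsUnit S.det := by
    rw [hS]; exact (mul_ne_zero (mul_ne_zero (pow_ne_zero _ hz) hβ) (pow_ne_zero _ hz)).isUnit
  have hGCu : IsUnit (G * C).det := by rw [hGC]; exact (mul_ne_zero hβ (pow_ne_zero _ hz)).isUnit
  have hGinv : G⁻¹ = C * S⁻¹ * Cᵀ := by
    rw [hSdef, Matrix.mul_inv_rev, Matrix.mul_inv_rev, Matrix.mul_assoc, Matrix.mul_assoc,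
      mul_nonsing_inv_cancel_left _ _ hCu, nonsing_inv_mul_cancel_right _ _ hCTu]
  have hGCinv : (G * C)⁻¹ = S⁻¹ * Cᵀ := by
    rw [Matrix.mul_inv_rev, hGinv, Matrix.mul_assoc, nonsing_inv_mul_cancel_left _ _ hCu]
  have hSsymm : S.IsSymm := by
    rw [IsSymm, hSdef, transpose_mul, transpose_mul, transpose_transpose,
      (isSymm_hankel (m + 2) β).eq, Matrix.mul_assoc]
  have hA₁ := det_mul_inv_apply_last S hSu
  have hA₀ := det_mul_inv_two_minor_last S hSu
  have hB := det_mul_inv_apply_last G hβ.isUnit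
  have hD := det_mul_inv_apply_last (G * C) hGCu
  rw [transpose_mul_hankel_mul_mulSubMatrix_submatrix_castSucc] at hA₁
  rw [show S.submatrix (Fin.castAdd 2) (Fin.castAdd 2)
      = (S.submatrix Fin.castSucc Fin.castSucc).submatrix Fin.castSucc Fin.castSucc from rfl,
    transpose_mul_hankel_mul_mulSubMatrix_submatrix_castSucc, hankel_submatrix_castSucc] at hA₀
  rw [hankel_submatrix_castSucc, hGinv, Matrix.mul_assoc, mulSubMatrix_mul_apply_last,
    mul_mulSubMatrix_transpose_apply_last, mul_mulSubMatrix_transpose_apply_last] at hB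
  rw [hankel_mul_mulSubMatrix_submatrix_castSucc, hGCinv,
    mul_mulSubMatrix_transpose_apply_last] at hD
  rw [← hA₁, ← hA₀, ← hB, ← hD, hS, hGC,
    hSsymm.inv.apply (Fin.last (m + 1)) (Fin.last m).castSucc]
  ring

theorem RingHom.map_det_hankel (f : R →+* S) (k : ℕ) (β : ℕ → R) :
    f (hankel k β).det = (hankel k (f ∘ β)).det := by
  rw [RingHom.map_det]
  rfl

theorem RingHom.comp_momentsMulSub (f : R →+* S) (z : R) (β : ℕ → R) :
    f ∘ momentsMulSub z β = momentsMulSub (f z) (f ∘ β) := by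
  ext k
  simp only [Function.comp_apply, momentsMulSub, map_sub, map_mul]

def hankelFayDefect (m : ℕ) (z : R) (β : ℕ → R) : R :=
  (hankel (m + 1) (momentsMulSub z (momentsMulSub z β))).det * (hankel (m + 1) β).det
    - (hankel m (momentsMulSub z (momentsMulSub z β))).det * (hankel (m + 2) β).det
    - (hankel (m + 1) (momentsMulSub z β)).det ^ 2

theorem RingHom.map_hankelFayDefect (f : R →+* S) (m : ℕ) (z : R) (β : ℕ → R) :
    f (hankelFayDefect m z β) = hankelFayDefect m (f z) (f ∘ β) := by
  simp only [hankelFayDefect, map_sub, map_mul, map_pow, f.map_det_hankel, f.comp_momentsMulSub]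

open MvPolynomial in
theorem det_hankel_X_ne_zero (k : ℕ) :
    (hankel k (fun i => (X (some i) : MvPolynomial (Option ℕ) ℤ))).det ≠ 0 := by
  intro h
  have := congrArg (eval (Option.elim · 0 (Pi.single (k - 1) 1))) h
  rw [RingHom.map_det_hankel, map_zero] at this
  rw [show (eval (Option.elim · 0 (Pi.single (k - 1) 1))) ∘ (fun i => X (some i))
      = (Pi.single (k - 1) 1 : ℕ → ℤ) from funext fun i => by simp,
    hankel_single_pred_eq_permMatrix, det_permutation] at this
  exact Units.ne_zero _ this

open MvPolynomial in
theorem hankelFayDefect_X (m : ℕ) :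
    hankelFayDefect m (X none) (fun i => (X (some i) : MvPolynomial (Option ℕ) ℤ)) = 0 := by
  let φ :=
    algebraMap (MvPolynomial (Option ℕ) ℤ) (FractionRing (MvPolynomial (Option ℕ) ℤ))
  have hφ : Function.Injective φ := IsFractionRing.injective _ _
  apply hφ
  rw [φ.map_hankelFayDefect, map_zero, hankelFayDefect, sub_eq_zero]
  refine hankel_fay_identity_of_field m ?_ ?_
  · exact (map_ne_zero_iff φ hφ).mpr (X_ne_zero _)
  · rw [← φ.map_det_hankel]
    exact (map_ne_zero_iff φ hφ).mpr (det_hankel_X_ne_zero _)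

open MvPolynomial in
theorem hankelFayDefect_eq_zero (m : ℕ) (z : R) (β : ℕ → R) :
    hankelFayDefect m z β = 0 := by
  let f := (aeval (Option.elim · z β) : MvPolynomial (Option ℕ) ℤ →ₐ[ℤ] R).toRingHom
  have hf : f ∘ (fun i => X (some i)) = β := funext fun i => by simp [f]
  have hz : f (X none) = z := by simp [f]
  rw [← hf, ← hz, ← f.map_hankelFayDefect, hankelFayDefect_X, map_zero]

theorem hankel_fay_identity (m : ℕ) (z : R) (β : ℕ → R) :
    (hankel (m + 1) (momentsMulSub z (momentsMulSub z β))).det * (hankel (m + 1) β).det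
      - (hankel m (momentsMulSub z (momentsMulSub z β))).det * (hankel (m + 2) β).det
      = (hankel (m + 1) (momentsMulSub z β)).det ^ 2 :=
  sub_eq_zero.mp (hankelFayDefect_eq_zero m z β)

noncomputable def moments (w : ℝ → ℝ) : ℕ → ℝ :=
  fun k => ∫ u, u ^ k * w u

theorem moments_sub_mul {w : ℝ → ℝ} (hw : ∀ k, Integrable fun u => u ^ k * w u) (z : ℝ) :
    moments (fun u => (z - u) * w u) = momentsMulSub z (moments w) := by
  ext k
  rw [moments, momentsMulSub, moments, moments, ← integral_const_mul,
    ← integral_sub ((hw k).const_mul z) (hw (k + 1))]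
  congr 1 with u
  ring

theorem MeasureTheory.Integrable.continuousOn_mul_of_support_subset {X : Type*}
    [TopologicalSpace X] [T2Space X] [MeasurableSpace X] [OpensMeasurableSpace X]
    {μ : Measure X} {K : Set X} (hK : IsCompact K) {ρ f : X → ℝ} (hρ : Integrable ρ μ)
    (hsupp : Function.support ρ ⊆ K) (hf : ContinuousOn f K) :
    Integrable (fun u => f u * ρ u) μ := by
  rw [← integrableOn_iff_integrable_of_support_subset
    ((Function.support_mul_subset_right f ρ).trans hsupp)]
  exact IntegrableOn.continuousOn_mul hf hρ.integrableOn hK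

theorem fay_identity_hankel
    (a b : ℝ) (ρ : ℝ → ℝ) (hρ : Integrable ρ)
    (hsupp : Function.support ρ ⊆ Set.Icc a b)
    (n : ℕ) (hn : 1 ≤ n) (z : ℝ) (hz : z ∉ Set.Icc a b) :
    Matrix.det (Matrix.of fun i j : Fin n =>
        ∫ u : ℝ, u ^ ((i : ℕ) + (j : ℕ)) * ((z - u) * ρ u)) *
      Matrix.det (Matrix.of fun i j : Fin n =>
        ∫ u : ℝ, u ^ ((i : ℕ) + (j : ℕ)) * (ρ u / (z - u))) -
    Matrix.det (Matrix.of fun i j : Fin (n - 1) =>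
        ∫ u : ℝ, u ^ ((i : ℕ) + (j : ℕ)) * ((z - u) * ρ u)) *
      Matrix.det (Matrix.of fun i j : Fin (n + 1) =>
        ∫ u : ℝ, u ^ ((i : ℕ) + (j : ℕ)) * (ρ u / (z - u)))
      = (Matrix.det (Matrix.of fun i j : Fin n =>
          ∫ u : ℝ, u ^ ((i : ℕ) + (j : ℕ)) * ρ u)) ^ 2 := by
  obtain ⟨m, rfl⟩ : ∃ m, n = m + 1 := ⟨n - 1, by omega⟩
  have hzu : ∀ u ∈ Set.Icc a b, z - u ≠ 0 := fun u hu h => hz (sub_eq_zero.mp h ▸ hu)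
  have hρk (k : ℕ) : Integrable fun u => u ^ k * ρ u :=
    hρ.continuousOn_mul_of_support_subset isCompact_Icc hsupp (continuous_pow k).continuousOn
  have hw (k : ℕ) : Integrable fun u => u ^ k * (ρ u / (z - u)) := by
    have := hρ.continuousOn_mul_of_support_subset isCompact_Icc hsupp
      (f := fun u => u ^ k / (z - u)) (by fun_prop (disch := assumption))
    simpa only [mul_div_assoc', div_mul_eq_mul_div] using this
  have hρw : (fun u => (z - u) * (ρ u / (z - u))) = ρ := by
    ext u
    by_cases hu : u ∈ Set.Icc a b
    · exact mul_div_cancel₀ _ (hzu u hu)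
    · simp [Function.notMem_support.mp (mt (@hsupp u) hu)]
  have hD := moments_sub_mul hw z
  have hA := moments_sub_mul hρk z
  rw [hρw] at hD
  have := hankel_fay_identity m z (moments fun u => ρ u / (z - u))
  rw [← hD, ← hA] at this
  exact this
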